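/- arXiv:0705.3592 — 2 statements merged into one kernel-verified Lean document; each statement's English description precedes it below -/
import Mathlib

section
/- For the metric g = (4x²+y²+1)(dx²+dy²) on ℝ², the function F₁(x,y,ξ₁,ξ₂) = (4x²+y²+1)(y²ξ₁² − (4x²+1)ξ₂²) is a quadratic integral of the geodesic flow: the Hamiltonian Poisson bracket of the corresponding functions on T*ℝ² vanishes. -/
/-!
The metric is a Liouville metric `(U x + V y)(dx² + dy²)` with `U x = 4x² + 1`, `V y = y²`, and
`F₁ = (V p₁² - U p₂²)/(U + V)` is its classical Liouville integral, which commutes with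
`H = (p₁² + p₂²)/(2(U + V))` for arbitrary differentiable `U`, `V`: after clearing `(U + V)³`,
the bracket is `(p₁² + p₂²)(-U' V p₁ + U V' p₂ + U' V p₁ - U V' p₂) = 0`.
-/

/-- Canonical Poisson bracket of two functions on T*ℝ² with coordinates (x, y, p₁, p₂). -/
noncomputable def pb (F G : ℝ → ℝ → ℝ → ℝ → ℝ) (x y p1 p2 : ℝ) : ℝ :=
    deriv (fun t => F t y p1 p2) x * deriv (fun t => G x y t p2) p1
  + deriv (fun t => F x t p1 p2) y * deriv (fun t => G x y p1 t) p2
  - deriv (fun t => F x y t p2) p1 * deriv (fun t => G t y p1 p2) x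
  - deriv (fun t => F x y p1 t) p2 * deriv (fun t => G x t p1 p2) y

noncomputable def liouvilleHamiltonian (U V : ℝ → ℝ) (x y p1 p2 : ℝ) : ℝ :=
  (p1 ^ 2 + p2 ^ 2) / (2 * (U x + V y))

noncomputable def liouvilleIntegral (U V : ℝ → ℝ) (x y p1 p2 : ℝ) : ℝ :=
  (V y * p1 ^ 2 - U x * p2 ^ 2) / (U x + V y)

theorem pb_liouvilleIntegral_liouvilleHamiltonian {U V : ℝ → ℝ} {x y : ℝ}
    (hU : DifferentiableAt ℝ U x) (hV : DifferentiableAt ℝ V y) (h : U x + V y ≠ 0)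
    (p1 p2 : ℝ) : pb (liouvilleIntegral U V) (liouvilleHamiltonian U V) x y p1 p2 = 0 := by
  have h2 : 2 * (U x + V y) ≠ 0 := by positivity
  simp only [pb, liouvilleIntegral, differentiableAt_const, DifferentiableAt.fun_sub_iff_right, hU,
    DifferentiableAt.fun_mul, DifferentiableAt.fun_add, ne_eq, h, not_false_eq_true, deriv_fun_div, deriv_fun_sub,
    deriv_fun_mul, deriv_const', zero_mul, deriv_fun_pow, Nat.cast_ofNat, Nat.add_one_sub_one, pow_one, mul_zero,
    add_zero, zero_sub, neg_mul, deriv_fun_add, liouvilleHamiltonian, deriv_div_const, differentiableAt_fun_id,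
    DifferentiableAt.fun_pow, deriv_id'', mul_one, DifferentiableAt.fun_sub_iff_left, hV, sub_zero, zero_add,
    deriv_sub_const_fun, differentiableAt_add_const_iff, h2, deriv_const_sub', differentiableAt_const_add_iff]
  field_simp
  ring

/-- For g = (4x²+y²+1)(dx²+dy²), F₁ = (y²p₁² − (4x²+1)p₂²)/(4x²+y²+1) is a quadratic
integral of the geodesic flow: it Poisson-commutes with the Hamiltonian. -/
theorem stmt_4 :
    ∀ x y p1 p2 : ℝ,
      pb (fun x y p1 p2 => (y ^ 2 * p1 ^ 2 - (4 * x ^ 2 + 1) * p2 ^ 2) / (4 * x ^ 2 + y ^ 2 + 1))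
         (fun x y p1 p2 => (p1 ^ 2 + p2 ^ 2) / (2 * (4 * x ^ 2 + y ^ 2 + 1)))
         x y p1 p2 = 0 := by
  intro x y p1 p2
  have hF : (fun x y p1 p2 : ℝ => (y ^ 2 * p1 ^ 2 - (4 * x ^ 2 + 1) * p2 ^ 2) / (4 * x ^ 2 + y ^ 2 + 1))
      = liouvilleIntegral (fun x => 4 * x ^ 2 + 1) (fun y => y ^ 2) := by
    funext x y p1 p2
    simp only [liouvilleIntegral]
    ring
  have hH : (fun x y p1 p2 : ℝ => (p1 ^ 2 + p2 ^ 2) / (2 * (4 * x ^ 2 + y ^ 2 + 1)))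
      = liouvilleHamiltonian (fun x => 4 * x ^ 2 + 1) (fun y => y ^ 2) := by
    funext x y p1 p2
    simp only [liouvilleHamiltonian]
    ring
  rw [hF, hH]
  exact pb_liouvilleIntegral_liouvilleHamiltonian (by fun_prop) (by fun_prop) (by positivity) p1 p2
end

section
/- For the metric g = (4x²+y²+1)(dx²+dy²) on ℝ², the scalar curvature R and its Laplacian Δ_g R are functionally independent on a nonempty open set; in particular dR ∧ d(Δ_g R) does not vanish identically. -/
noncomputable def pdx (f : ℝ → ℝ → ℝ) (x y : ℝ) : ℝ := deriv (fun t => f t y) x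
noncomputable def pdy (f : ℝ → ℝ → ℝ) (x y : ℝ) : ℝ := deriv (fun t => f x t) y

/-- Conformal factor λ = 4x² + y² + 1. -/
noncomputable def lam (x y : ℝ) : ℝ := 4 * x ^ 2 + y ^ 2 + 1

/-- Scalar curvature R = 2K = −(1/λ)Δ(log λ) of the metric λ(dx²+dy²). -/
noncomputable def scalR (x y : ℝ) : ℝ :=
  -(1 / lam x y) *
    (pdx (pdx (fun a b => Real.log (lam a b))) x y +
     pdy (pdy (fun a b => Real.log (lam a b))) x y)

/-- Laplace–Beltrami of R: Δ_g R = (1/λ)(R_xx + R_yy). -/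
noncomputable def lapR (x y : ℝ) : ℝ :=
  (1 / lam x y) * (pdx (pdx scalR) x y + pdy (pdy scalR) x y)

/-! Each quantity involved is a rational function whose denominator is a power of λ, so `R`,
`Δ_g R` and their first partials have closed forms obtained by the quotient rule. The resulting
Jacobian `R_x (Δ_g R)_y - R_y (Δ_g R)_x = 69120 x y (4x² + 3y² + 9) / λ⁹` vanishes only on the
coordinate axes. -/

lemma lam_pos (x y : ℝ) : 0 < lam x y := by unfold lam; positivity

lemma pdx_log_lam : pdx (fun x y => Real.log (lam x y)) = fun x y => 8 * x / lam x y := by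
  funext x y
  -- `positivity` discharges the side conditions `λ ≠ 0` of the log and quotient rules.
  simp (disch := first | fun_prop | positivity) [pdx, lam]
  ring

lemma pdy_log_lam : pdy (fun x y => Real.log (lam x y)) = fun x y => 2 * y / lam x y := by
  funext x y
  simp (disch := first | fun_prop | positivity) [pdy, lam]

lemma scalR_eq : scalR = fun x y => (24 * x ^ 2 - 6 * y ^ 2 - 10) / lam x y ^ 3 := by
  funext x y
  rw [scalR, pdx_log_lam, pdy_log_lam]
  simp (disch := first | fun_prop | positivity) [pdx, pdy, lam]
  field_simp
  ring

lemma pdx_scalR :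
    pdx scalR = fun x y => (-384 * x ^ 3 + 192 * x * y ^ 2 + 288 * x) / lam x y ^ 4 := by
  funext x y
  rw [scalR_eq]
  simp (disch := first | fun_prop | positivity) [pdx, lam]
  field_simp
  ring

lemma pdy_scalR :
    pdy scalR = fun x y => (-192 * x ^ 2 * y + 24 * y ^ 3 + 48 * y) / lam x y ^ 4 := by
  funext x y
  rw [scalR_eq]
  simp (disch := first | fun_prop | positivity) [pdy, lam]
  field_simp
  ring

lemma lapR_eq : lapR = fun x y =>
    (6912 * x ^ 4 - 4896 * x ^ 2 * y ^ 2 - 9216 * x ^ 2 + 72 * y ^ 4 + 216 * y ^ 2 + 336)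
      / lam x y ^ 6 := by
  funext x y
  rw [lapR, pdx_scalR, pdy_scalR]
  simp (disch := first | fun_prop | positivity) [pdx, pdy, lam]
  field_simp
  ring

lemma pdx_lapR : pdx lapR = fun x y =>
    (-221184 * x ^ 5 + 223488 * x ^ 3 * y ^ 2 + 396288 * x ^ 3 - 13248 * x * y ^ 4
      - 38592 * x * y ^ 2 - 34560 * x) / lam x y ^ 7 := by
  funext x y
  rw [lapR_eq]
  simp (disch := first | fun_prop | positivity) [pdx, lam]
  field_simp
  ring

lemma pdy_lapR : pdy lapR = fun x y =>
    (-122112 * x ^ 4 * y + 50112 * x ^ 2 * y ^ 3 + 102528 * x ^ 2 * y - 576 * y ^ 5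
      - 1872 * y ^ 3 - 3600 * y) / lam x y ^ 7 := by
  funext x y
  rw [lapR_eq]
  simp (disch := first | fun_prop | positivity) [pdy, lam]
  field_simp
  ring

lemma jacobian_scalR_lapR (x y : ℝ) :
    pdx scalR x y * pdy lapR x y - pdy scalR x y * pdx lapR x y
      = 69120 * x * y * (4 * x ^ 2 + 3 * y ^ 2 + 9) / lam x y ^ 9 := by
  rw [pdx_scalR, pdy_scalR, pdx_lapR, pdy_lapR]
  have := (lam_pos x y).ne'
  field_simp
  rw [lam]
  ring

lemma jacobian_scalR_lapR_ne_zero {x y : ℝ} (hx : x ≠ 0) (hy : y ≠ 0) :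
    pdx scalR x y * pdy lapR x y - pdy scalR x y * pdx lapR x y ≠ 0 := by
  rw [jacobian_scalR_lapR]
  have := lam_pos x y
  positivity

/-- For g = (4x²+y²+1)(dx²+dy²), the scalar curvature R and Δ_g R are functionally
independent on a nonempty open set; in particular dR ∧ d(Δ_g R) does not vanish identically. -/
theorem stmt_5 :
    (∃ s : Set (ℝ × ℝ), IsOpen s ∧ s.Nonempty ∧
      ∀ p ∈ s, pdx scalR p.1 p.2 * pdy lapR p.1 p.2
             - pdy scalR p.1 p.2 * pdx lapR p.1 p.2 ≠ 0) ∧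
    ∃ x y : ℝ, pdx scalR x y * pdy lapR x y - pdy scalR x y * pdx lapR x y ≠ 0 := by
  refine ⟨⟨{0}ᶜ ×ˢ {0}ᶜ, isOpen_compl_singleton.prod isOpen_compl_singleton,
    ⟨(1, 1), by simp⟩, fun p hp => jacobian_scalR_lapR_ne_zero hp.1 hp.2⟩,
    1, 1, jacobian_scalR_lapR_ne_zero one_ne_zero one_ne_zero⟩
end
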